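/- For every n ≥ 1, ℙ( Σ_{i=k}^n (F_i − H_i) ≥ 0 for every k = 1, 2, …, n ) = Σ_{A ⊆ {1,…,n}} F(|A|) · ∏_{i∈A} p_i · ∏_{i∉A} (1−p_i), where p_i = 2α_i(1−α_i); that is, this probability equals the expectation E[F(M_1+⋯+M_n)] for independent Bernoulli random variables M_i with success probabilities p_i. -/

import Mathlib

/-!
Let `S, T ⊆ {1, …, n}` be the positions where `F` resp. `H` equals `1`. The event says that on
every final segment `T` has at most as many elements as `S`. Put `A = S ∆ T`, `U = S \ T`,
`B = S ∩ T`: adding `B` to both sets does not change the condition, so it only asks that the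
`±1` walk on `A` with up-steps `U` has all suffix sums `≥ 0`; and the weight of `(S, T)` is
`∏_{A} α(1 - α)` times a factor over `{1, …, n} \ A` that sums over `B` to `∏ (1 - p_i)`.
Counting the admissible `U` by stripping off the largest element of `A` gives `C(m, ⌊m/2⌋)`
for `m = |A|`, and `2^m ∏_{A} α(1 - α) = ∏_{A} p_i`.
-/

open MeasureTheory ProbabilityTheory Finset

theorem Nat.sum_range_succ_choose_mul {R : Type*} [Semiring R] (m : ℕ) (w : ℕ → R) :
    ∑ t ∈ range (m + 2), ((m + 1).choose t : R) * w t
      = ∑ t ∈ range (m + 1), (m.choose t : R) * (w t + w (t + 1)) := by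
  have hshift : ∑ t ∈ range (m + 1), (m.choose (t + 1) : R) * w (t + 1) + w 0
      = ∑ t ∈ range (m + 1), (m.choose t : R) * w t := by
    have h := sum_range_succ' (fun t => (m.choose t : R) * w t) (m + 1)
    rw [sum_range_succ, Nat.choose_succ_self, Nat.cast_zero, zero_mul, add_zero] at h
    simpa using h.symm
  rw [sum_range_succ']
  simp only [Nat.choose_succ_succ, Nat.cast_add, add_mul, mul_add, sum_add_distrib,
    Nat.choose_zero_right, Nat.cast_one, one_mul, add_assoc, hshift]
  exact add_comm _ _

/-- The number of `±1` walks of length `m` all of whose suffix sums are `≥ -r`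
(`card_filter_powerset_tailDominates`); the window on the number `t` of up-steps comes from the
reflection principle. -/
def ballotCount (m r : ℕ) : ℕ :=
  ∑ t ∈ range (m + 1), m.choose t * if m ≤ 2 * t + r ∧ 2 * t ≤ m + r + 1 then 1 else 0

theorem ballotCount_zero_left (r : ℕ) : ballotCount 0 r = 1 := by
  simp [ballotCount]

theorem ballotCount_succ (m r : ℕ) :
    ballotCount (m + 1) r =
      ballotCount m (r + 1) + if r = 0 then 0 else ballotCount m (r - 1) := by
  have hpascal := Nat.sum_range_succ_choose_mul (R := ℕ) m
    fun t => if m + 1 ≤ 2 * t + r ∧ 2 * t ≤ m + 1 + r + 1 then 1 else 0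
  simp only [Nat.cast_id] at hpascal
  rw [ballotCount, hpascal]
  split_ifs with hr
  · refine sum_congr rfl fun t _ => ?_
    congr 1
    split_ifs <;> omega
  · rw [ballotCount, ballotCount, ← sum_add_distrib]
    refine sum_congr rfl fun t _ => ?_
    rw [← mul_add]
    congr 1
    split_ifs <;> omega

theorem ballotCount_zero_right (m : ℕ) : ballotCount m 0 = m.choose (m / 2) := by
  have hcond : ∀ t, (m ≤ 2 * t + 0 ∧ 2 * t ≤ m + 0 + 1) ↔ (m + 1) / 2 = t := fun t => by omega
  simp only [ballotCount, hcond, mul_boole, sum_ite_eq, mem_range]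
  rw [if_pos (by omega)]
  exact Nat.choose_symm_of_eq_add (by omega)

section TailDominates

variable {ι : Type*} [LinearOrder ι]

def TailDominates (r : ℕ) (S T : Finset ι) : Prop :=
  ∀ k, #{x ∈ T | k ≤ x} ≤ #{x ∈ S | k ≤ x} + r

variable {r : ℕ} {S T B : Finset ι} {a : ι}

theorem tailDominates_union_iff (hS : Disjoint S B) (hT : Disjoint T B) :
    TailDominates r (S ∪ B) (T ∪ B) ↔ TailDominates r S T := by
  refine forall_congr' fun k => ?_
  rw [filter_union, filter_union, card_union_of_disjoint (disjoint_filter_filter hS),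
    card_union_of_disjoint (disjoint_filter_filter hT)]
  omega

theorem filter_le_eq_empty_of_forall_lt {s : Finset ι} {k : ι} (hs : ∀ x ∈ s, x < k) :
    {x ∈ s | k ≤ x} = ∅ :=
  filter_false_of_mem fun x hx => (hs x hx).not_ge

theorem card_filter_le_insert_of_forall_lt {s : Finset ι} {k : ι} (hs : ∀ x ∈ s, x < a)
    (hk : k ≤ a) :
    #{x ∈ insert a s | k ≤ x} = #{x ∈ s | k ≤ x} + 1 := by
  rw [filter_insert, if_pos hk, card_insert_of_notMem fun h => (hs a (mem_filter.1 h).1).false]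

theorem tailDominates_insert_left (hS : ∀ x ∈ S, x < a) (hT : ∀ x ∈ T, x < a) :
    TailDominates r (insert a S) T ↔ TailDominates (r + 1) S T := by
  refine forall_congr' fun k => ?_
  by_cases hk : k ≤ a
  · rw [card_filter_le_insert_of_forall_lt hS hk]; omega
  · simp [filter_le_eq_empty_of_forall_lt fun x hx => (hT x hx).trans (not_le.1 hk)]

theorem tailDominates_insert_right (hS : ∀ x ∈ S, x < a) (hT : ∀ x ∈ T, x < a) :
    TailDominates r S (insert a T) ↔ r ≠ 0 ∧ TailDominates (r - 1) S T := by
  have hr_ne : TailDominates r S (insert a T) → r ≠ 0 := fun h => by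
    have := h a
    rw [card_filter_le_insert_of_forall_lt hT le_rfl, filter_le_eq_empty_of_forall_lt hS,
      card_empty] at this
    omega
  refine ⟨fun h => ⟨hr_ne h, fun k => ?_⟩, fun ⟨hr, h⟩ k => ?_⟩ <;> by_cases hk : k ≤ a
  · have := h k; rw [card_filter_le_insert_of_forall_lt hT hk] at this; have := hr_ne h; omega
  · simp [filter_le_eq_empty_of_forall_lt fun x hx => (hT x hx).trans (not_le.1 hk)]
  · have := h k; rw [card_filter_le_insert_of_forall_lt hT hk]; omega
  · have hlt : ∀ x ∈ insert a T, x < k := by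
      simpa [not_le.1 hk] using fun x hx => (hT x hx).trans (not_le.1 hk)
    simp [filter_le_eq_empty_of_forall_lt hlt]

open Classical in
theorem card_filter_powerset_tailDominates (A : Finset ι) (r : ℕ) :
    #{U ∈ A.powerset | TailDominates r U (A \ U)} = ballotCount #A r := by
  induction A using Finset.induction_on_max generalizing r with
  | empty => simp [TailDominates, ballotCount_zero_left]
  | insert a s hlt ih =>
    have ha : a ∉ s := fun h => lt_irrefl a (hlt a h)
    have hU : ∀ U ∈ s.powerset, ∀ x ∈ U, x < a := fun U hU x hx => hlt x (mem_powerset.1 hU hx)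
    have hsU : ∀ U : Finset ι, ∀ x ∈ s \ U, x < a := fun U x hx => hlt x (mem_sdiff.1 hx).1
    rw [card_filter, sum_powerset_insert ha, card_insert_of_notMem ha, ballotCount_succ, add_comm,
      ← ih, card_filter]
    congr 1
    · refine sum_congr rfl fun U hU' => ?_
      rw [insert_sdiff_insert, sdiff_insert_of_notMem ha,
        tailDominates_insert_left (hU U hU') (hsU U)]
    · have hsdiff : ∀ U ∈ s.powerset, insert a s \ U = insert a (s \ U) := fun U hU' =>
        insert_sdiff_of_notMem _ fun h => ha (mem_powerset.1 hU' h)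
      rw [sum_congr rfl fun U hU' => by
        rw [hsdiff U hU', tailDominates_insert_right (hU U hU') (hsU U)]]
      rcases r with _ | r
      · simp
      · simp only [ne_eq, Nat.add_one_ne_zero, not_false_eq_true, true_and, if_false,
          Nat.add_sub_cancel]
        rw [← card_filter, ih]

end TailDominates

theorem sum_powerset_powerset_eq_sum_symmDiff {ι M : Type*} [DecidableEq ι] [AddCommMonoid M]
    (I : Finset ι) (f : Finset ι → Finset ι → M) :
    ∑ S ∈ I.powerset, ∑ T ∈ I.powerset, f S T
      = ∑ A ∈ I.powerset, ∑ U ∈ A.powerset, ∑ B ∈ (I \ A).powerset, f (U ∪ B) (A \ U ∪ B) := by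
  simp_rw [← sum_product']
  rw [sum_sigma']
  refine sum_nbij' (fun p => ⟨symmDiff p.1 p.2, (p.1 \ p.2, p.1 ∩ p.2)⟩)
    (fun x => (x.2.1 ∪ x.2.2, x.1 \ x.2.1 ∪ x.2.2)) ?_ ?_ ?_ ?_ fun p _ => ?_
  rotate_right
  · congr 1 <;> ext <;> simp only [mem_union, mem_sdiff, mem_inter, mem_symmDiff] <;> tauto
  all_goals
    simp only [mem_product, mem_sigma, mem_powerset, subset_iff, mem_union, mem_sdiff,
      mem_inter, mem_symmDiff, Prod.forall, Sigma.forall, Prod.ext_iff, Sigma.ext_iff,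
      Finset.ext_iff, heq_eq_eq]
    grind

theorem prod_ite_mem_of_subset {ι M : Type*} [DecidableEq ι] [CommMonoid M] {S I : Finset ι}
    (hS : S ⊆ I) (f g : ι → M) :
    ∏ i ∈ I, (if i ∈ S then f i else g i) = (∏ i ∈ S, f i) * ∏ i ∈ I \ S, g i := by
  rw [prod_ite, filter_mem_eq_inter, inter_eq_right.2 hS, ← sdiff_eq_filter]

open Classical in
theorem sum_tailDominates_prod_ite {ι R : Type*} [LinearOrder ι] [CommRing R]
    (I : Finset ι) (q : ι → R) :
    ∑ S ∈ I.powerset, ∑ T ∈ I.powerset,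
      (if TailDominates 0 S T then
        (∏ i ∈ I, if i ∈ S then q i else 1 - q i) * ∏ i ∈ I, if i ∈ T then q i else 1 - q i
      else 0)
    = ∑ A ∈ I.powerset, ((#A).choose (#A / 2) : R) *
        ((∏ i ∈ A, q i * (1 - q i)) * ∏ i ∈ I \ A, (q i * q i + (1 - q i) * (1 - q i))) := by
  rw [sum_powerset_powerset_eq_sum_symmDiff]
  refine sum_congr rfl fun A hA => ?_
  have hAI := mem_powerset.1 hA
  have hterm : ∀ U ∈ A.powerset, ∀ B ∈ (I \ A).powerset,
      (if TailDominates 0 (U ∪ B) (A \ U ∪ B) then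
        (∏ i ∈ I, if i ∈ U ∪ B then q i else 1 - q i) *
          ∏ i ∈ I, if i ∈ A \ U ∪ B then q i else 1 - q i
      else 0)
      = (if TailDominates 0 U (A \ U) then ∏ i ∈ A, q i * (1 - q i) else 0) *
          ∏ i ∈ I \ A, if i ∈ B then q i * q i else (1 - q i) * (1 - q i) := by
    intro U hU B hB
    rw [mem_powerset] at hU hB
    have hAB : Disjoint A B := (disjoint_sdiff.mono_right hB)
    rw [tailDominates_union_iff (hAB.mono_left hU) (hAB.mono_left sdiff_subset), ite_mul,
      zero_mul, ← prod_mul_distrib, ← prod_sdiff hAI, mul_comm]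
    congr 2
    · refine prod_congr rfl fun i hi => ?_
      have hiB : i ∉ B := disjoint_left.1 hAB hi
      by_cases hiU : i ∈ U <;> simp [hi, hiU, hiB]
      ring
    · refine prod_congr rfl fun i hi => ?_
      have hiA := (mem_sdiff.1 hi).2
      have hiU : i ∉ U := fun h => hiA (hU h)
      by_cases hiB : i ∈ B <;> simp [hiA, hiU, hiB]
  rw [sum_congr rfl fun U hU => sum_congr rfl (hterm U hU), ← sum_mul_sum, ← sum_filter,
    sum_const, card_filter_powerset_tailDominates, ballotCount_zero_right, nsmul_eq_mul, mul_assoc,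
    prod_add]
  congr 2
  exact sum_congr rfl fun B hB => prod_ite_mem_of_subset (mem_powerset.1 hB) _ _

theorem filter_eq_one_eq_iff {ι : Type*} [DecidableEq ι] {x : ι → ℕ}
    (hx : ∀ i, x i = 0 ∨ x i = 1) {J R : Finset ι} (hR : R ⊆ J) :
    {j ∈ J | x j = 1} = R ↔ ∀ j ∈ J, x j = if j ∈ R then 1 else 0 := by
  constructor
  · rintro rfl j hj
    rcases hx j with h | h <;> simp [h, hj]
  · intro h
    ext j
    by_cases hj : j ∈ J
    · by_cases hjR : j ∈ R <;> simp [hj, hjR, h j hj]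
    · simpa [hj] using fun h' => hj (hR h')

section Bernoulli

variable {Ω ι : Type*} [MeasurableSpace Ω] {P : Measure Ω} [IsProbabilityMeasure P]

theorem measureReal_eq_zero_eq_one_sub {X : Ω → ℕ} (hX : Measurable X)
    (hval : ∀ ω, X ω = 0 ∨ X ω = 1) :
    P.real {ω | X ω = 0} = 1 - P.real {ω | X ω = 1} := by
  have hcompl : {ω | X ω = 0} = {ω | X ω = 1}ᶜ := by
    ext ω
    rcases hval ω with h | h <;> simp [h]
  exact hcompl ▸ probReal_compl_eq_one_sub (hX (measurableSet_singleton 1))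

theorem measureReal_pred_filter_eq_one [DecidableEq ι] {X : ι → Ω → ℕ}
    (hX : ∀ i, Measurable (X i)) (hval : ∀ i ω, X i ω = 0 ∨ X i ω = 1) (hind : iIndepFun X P)
    {J : Finset ι} {q : ι → ℝ} (hq : ∀ j ∈ J, P.real {ω | X j ω = 1} = q j) (Q : Finset ι → Prop)
    [DecidablePred Q] :
    P.real {ω | Q {j ∈ J | X j ω = 1}} =
      ∑ R ∈ J.powerset, if Q R then ∏ j ∈ J, (if j ∈ R then q j else 1 - q j) else 0 := by
  set Y : Ω → Finset ι := fun ω => {j ∈ J | X j ω = 1}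
  have hfiber : ∀ R ∈ J.powerset,
      Y ⁻¹' {R} = ⋂ j ∈ J, X j ⁻¹' {if j ∈ R then 1 else 0} := fun R hR => by
    ext ω
    simpa [Y] using filter_eq_one_eq_iff (fun j => hval j ω) (mem_powerset.1 hR)
  have hmeas : ∀ R ∈ J.powerset, MeasurableSet (Y ⁻¹' {R}) := fun R hR => by
    rw [hfiber R hR]
    exact J.measurableSet_biInter fun j _ => hX j (measurableSet_singleton _)
  have hevent : {ω | Q (Y ω)} = Y ⁻¹' ↑{R ∈ J.powerset | Q R} := by
    ext ω
    simp [Y]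
  rw [hevent, ← sum_measureReal_preimage_singleton _ fun R hR => hmeas R (mem_filter.1 hR).1,
    sum_filter]
  refine sum_congr rfl fun R hR => if_congr Iff.rfl ?_ rfl
  rw [hfiber R hR, measureReal_def, hind.measure_inter_preimage_eq_mul J
    fun _ _ => measurableSet_singleton _, ENNReal.toReal_prod]
  refine prod_congr rfl fun j hj => ?_
  rw [← measureReal_def]
  split_ifs
  · exact hq j hj
  · rw [← hq j hj, ← measureReal_eq_zero_eq_one_sub (hX j) (hval j)]
    rfl

end Bernoulli

theorem sum_Icc_eq_card_filter {x : ℕ → ℕ} (hx : ∀ i, x i = 0 ∨ x i = 1) {k n : ℕ} (hk : 1 ≤ k) :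
    ∑ i ∈ Icc k n, x i = #{i ∈ {j ∈ Icc 1 n | x j = 1} | k ≤ i} := by
  have hx' : ∀ i, x i = if x i = 1 then 1 else 0 := fun i => by
    rcases hx i with h | h <;> simp [h]
  rw [sum_congr rfl fun i _ => hx' i, ← card_filter, filter_filter]
  congr 1
  ext i
  simp only [mem_filter, mem_Icc]
  omega

theorem tailDominates_iff_forall_mem_Icc {r n : ℕ} {S T : Finset ℕ} (hS : S ⊆ Icc 1 n)
    (hT : T ⊆ Icc 1 n) :
    TailDominates r S T ↔ ∀ k ∈ Icc 1 n, #{x ∈ T | k ≤ x} ≤ #{x ∈ S | k ≤ x} + r := by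
  refine ⟨fun h k _ => h k, fun h k => ?_⟩
  obtain ⟨x, hx⟩ | hempty := ({x ∈ T | k ≤ x} : Finset ℕ).eq_empty_or_nonempty.symm
  · have hx := mem_filter.1 hx
    have hxI := mem_Icc.1 (hT hx.1)
    have hfilter : ∀ s ⊆ Icc 1 n, {y ∈ s | max k 1 ≤ y} = {y ∈ s | k ≤ y} := fun s hs =>
      filter_congr fun y hy => by have := mem_Icc.1 (hs hy); omega
    simpa only [hfilter S hS, hfilter T hT] using
      h (max k 1) (mem_Icc.2 ⟨le_max_right _ _, by omega⟩)
  · simp [hempty]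

theorem forall_sum_Icc_le_iff_tailDominates {f g : ℕ → ℕ} (hf : ∀ i, f i = 0 ∨ f i = 1)
    (hg : ∀ i, g i = 0 ∨ g i = 1) (n : ℕ) :
    (∀ k ∈ Icc 1 n, ∑ i ∈ Icc k n, g i ≤ ∑ i ∈ Icc k n, f i) ↔
      TailDominates 0 {i ∈ Icc 1 n | f i = 1} {i ∈ Icc 1 n | g i = 1} := by
  rw [tailDominates_iff_forall_mem_Icc (filter_subset _ _) (filter_subset _ _)]
  refine forall₂_congr fun k hk => ?_
  rw [sum_Icc_eq_card_filter hf (mem_Icc.1 hk).1, sum_Icc_eq_card_filter hg (mem_Icc.1 hk).1,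
    add_zero]

theorem sum_powerset_disjSum {α β M : Type*} [AddCommMonoid M] (s : Finset α) (t : Finset β)
    (f : Finset (α ⊕ β) → M) :
    ∑ R ∈ (s.disjSum t).powerset, f R = ∑ S ∈ s.powerset, ∑ T ∈ t.powerset, f (S.disjSum T) := by
  rw [← sum_product']
  exact sum_nbij' (fun R => (R.toLeft, R.toRight)) (fun p => p.1.disjSum p.2)
    (by simp [subset_disjSum]) (by simp [subset_disjSum])
    (by simp [toLeft_disjSum_toRight]) (by simp)
    (by simp [toLeft_disjSum_toRight])

theorem walk_probability_eq_expectation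
    {Ω : Type*} [MeasurableSpace Ω] (P : Measure Ω) [IsProbabilityMeasure P]
    (α : ℕ → ℝ) (hα : ∀ k, α k ∈ Set.Icc (0:ℝ) 1)
    (F H : ℕ → Ω → ℕ)
    (hFmeas : ∀ i, Measurable (F i)) (hHmeas : ∀ i, Measurable (H i))
    (hFval : ∀ i ω, F i ω = 0 ∨ F i ω = 1)
    (hHval : ∀ i ω, H i ω = 0 ∨ H i ω = 1)
    (hindep : iIndepFun (Sum.elim F H) P)
    (hF1 : ∀ i, 1 ≤ i → P {ω | F i ω = 1} = ENNReal.ofReal (α i))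
    (hH1 : ∀ i, 1 ≤ i → P {ω | H i ω = 1} = ENNReal.ofReal (α i))
    (n : ℕ) :
    (P {ω | ∀ k ∈ Finset.Icc 1 n,
        (∑ i ∈ Finset.Icc k n, H i ω) ≤ ∑ i ∈ Finset.Icc k n, F i ω}).toReal
      = ∑ A ∈ (Finset.Icc 1 n).powerset,
          ((A.card.choose (A.card / 2) : ℝ) / 2 ^ A.card) *
            ((∏ i ∈ A, 2 * α i * (1 - α i)) *
              ∏ i ∈ Finset.Icc 1 n \ A, (1 - 2 * α i * (1 - α i))) := by
  classical
  have hq : ∀ j ∈ (Icc 1 n).disjSum (Icc 1 n),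
      P.real {ω | Sum.elim F H j ω = 1} = Sum.elim α α j := by
    rintro (i | i) hi <;> simp only [inl_mem_disjSum, inr_mem_disjSum, mem_Icc] at hi
    · simp [measureReal_def, hF1 i hi.1, (hα i).1]
    · simp [measureReal_def, hH1 i hi.1, (hα i).1]
  have hevent : {ω | ∀ k ∈ Icc 1 n, ∑ i ∈ Icc k n, H i ω ≤ ∑ i ∈ Icc k n, F i ω} =
      {ω | TailDominates 0 {j ∈ (Icc 1 n).disjSum (Icc 1 n) | Sum.elim F H j ω = 1}.toLeft
        {j ∈ (Icc 1 n).disjSum (Icc 1 n) | Sum.elim F H j ω = 1}.toRight} :=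
    Set.ext fun ω => (forall_sum_Icc_le_iff_tailDominates (hFval · ω) (hHval · ω) n).trans <|
      Iff.of_eq <| congrArg₂ (TailDominates 0) (by ext; simp) (by ext; simp)
  rw [← measureReal_def, hevent, measureReal_pred_filter_eq_one (Sum.forall.2 ⟨hFmeas, hHmeas⟩)
    (Sum.forall.2 ⟨hFval, hHval⟩) hindep hq (fun R => TailDominates 0 R.toLeft R.toRight),
    sum_powerset_disjSum]
  simp only [toLeft_disjSum, toRight_disjSum, prod_disjSum, inl_mem_disjSum, inr_mem_disjSum,
    Sum.elim_inl, Sum.elim_inr]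
  rw [sum_tailDominates_prod_ite]
  refine sum_congr rfl fun A _ => ?_
  have hpow : ∏ i ∈ A, 2 * α i * (1 - α i) = 2 ^ #A * ∏ i ∈ A, α i * (1 - α i) := by
    simp [prod_mul_distrib, mul_assoc]
  rw [hpow, prod_congr rfl fun i _ =>
    (by ring : 1 - 2 * α i * (1 - α i) = α i * α i + (1 - α i) * (1 - α i))]
  field_simp
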